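/- arXiv:1810.13036 — 6 statements merged into one kernel-verified Lean document; each statement's English description precedes it below -/
import Mathlib

section
/- Let G be a finite simple graph with no induced K_{1,3} (claw-free). If G admits a proper k-coloring, then G admits an equitable k-coloring. -/
/-- A proper `k`-coloring: adjacent vertices receive distinct colors. -/
def IsProperColoring {V : Type*} (G : SimpleGraph V) {k : ℕ} (c : V → Fin k) : Prop :=
  ∀ u v : V, G.Adj u v → c u ≠ c v

/-- An equitable `k`-coloring: proper, and every color class has size `⌊n/k⌋` or `⌈n/k⌉`. -/
def IsEquitableColoring {V : Type*} [Fintype V] (G : SimpleGraph V) {k : ℕ}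
    (c : V → Fin k) : Prop :=
  IsProperColoring G c ∧ ∀ i : Fin k,
    (Finset.univ.filter fun v => c v = i).card = Fintype.card V / k ∨
    (Finset.univ.filter fun v => c v = i).card = (Fintype.card V + k - 1) / k

/-- `G` admits an equitable `k`-coloring. -/
def HasEquitableColoring {V : Type*} [Fintype V] (G : SimpleGraph V) (k : ℕ) : Prop :=
  ∃ c : V → Fin k, IsEquitableColoring G c

/-- Claw-free: no vertex has three pairwise non-adjacent neighbors (no induced `K_{1,3}`). -/
def ClawFree {V : Type*} (G : SimpleGraph V) : Prop :=
  ∀ v x y z : V, G.Adj v x → G.Adj v y → G.Adj v z →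
    x ≠ y → x ≠ z → y ≠ z → G.Adj x y ∨ G.Adj x z ∨ G.Adj y z

/-!
Recolour along Kempe chains. If two colour classes `i` and `j` differ in size by at least two,
look at the edges between them. By claw-freeness a vertex of colour `j` has at most two neighbours
of colour `i`, so in every component of this subgraph the `i`-vertices outnumber the `j`-vertices by
at most one: sending each `i`-vertex other than a root to its parent in a breadth-first tree is
injective. Hence some component has exactly one more `i`-vertex than `j`-vertices, and swapping `i`
and `j` on it moves one vertex from the larger class to the smaller one, which strictly decreases
the sum of the squares of the class sizes.
-/

open Finset SimpleGraph

theorem Finset.EquitableOn.eq_div_or_eq_ceil_div {ι : Type*} {s : Finset ι} {f : ι → ℕ}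
    (hf : (s : Set ι).EquitableOn f) {a : ι} (ha : a ∈ s) :
    f a = (∑ i ∈ s, f i) / #s ∨ f a = (∑ i ∈ s, f i + #s - 1) / #s := by
  refine (equitableOn_iff.1 hf a ha).imp_right fun hfa => ?_
  have hlow : #s * ((∑ i ∈ s, f i) / #s) < ∑ i ∈ s, f i := by
    rw [← smul_eq_mul, ← sum_const]
    exact sum_lt_sum (fun i hi => EquitableOn.le hf hi) ⟨a, ha, by omega⟩
  have hup := Nat.lt_mul_div_succ (∑ i ∈ s, f i) (card_pos.2 ⟨a, ha⟩)
  rw [hfa]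
  refine (Nat.div_eq_of_lt_le ?_ ?_).symm <;> grind

theorem sum_sq_lt_of_transfer {ι : Type*} [Fintype ι] {f g : ι → ℕ} {i j : ι}
    (hij : f j + 1 < f i) (hi : g i + 1 = f i) (hj : g j = f j + 1)
    (hl : ∀ l, l ≠ i → l ≠ j → g l = f l) : ∑ l, g l ^ 2 < ∑ l, f l ^ 2 := by
  have hne : i ≠ j := by rintro rfl; omega
  have h : ∑ l, ((f l : ℤ) ^ 2 - g l ^ 2) = (f i ^ 2 - g i ^ 2) + (f j ^ 2 - g j ^ 2) :=
    Fintype.sum_eq_add i j hne fun l ⟨hli, hlj⟩ => by rw [hl l hli hlj, sub_self]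
  rw [sum_sub_distrib] at h
  zify at hi hj hij ⊢
  nlinarith

section Graph

variable {V : Type*}

theorem ClawFree.card_le_two {G : SimpleGraph V} (hG : ClawFree G) {w : V}
    {s : Finset V} (hadj : ∀ x ∈ s, G.Adj w x) (hs : G.IsIndepSet s) : #s ≤ 2 := by
  by_contra! h
  obtain ⟨x, hx, y, hy, z, hz, hxy, hxz, hyz⟩ := two_lt_card.1 h
  rcases hG w x y z (hadj x hx) (hadj y hy) (hadj z hz) hxy hxz hyz with h' | h' | h'
  exacts [hs hx hy hxy h', hs hx hz hxz h', hs hy hz hyz h']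

theorem SimpleGraph.Reachable.exists_adj_dist_lt {H : SimpleGraph V} {v r : V}
    (h : H.Reachable v r) (hne : v ≠ r) : ∃ w, H.Adj v w ∧ H.dist w r < H.dist v r := by
  obtain ⟨p, hp⟩ := h.exists_walk_length_eq_dist
  have hnil : ¬ p.Nil := Walk.not_nil_of_ne hne
  refine ⟨p.snd, p.adj_snd hnil, ?_⟩
  have := dist_le p.tail
  have := Walk.length_tail_add_one hnil
  omega

theorem card_le_card_add_one_of_bipartite {H : SimpleGraph V} {A B : Finset V}
    (hAB : Disjoint A B) (hreach : ∀ a ∈ A, ∀ a' ∈ A, H.Reachable a a')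
    (hA : ∀ a ∈ A, ∀ v, H.Adj a v → v ∈ B) (hB : ∀ b ∈ B, ∀ v, H.Adj b v → v ∈ A)
    (hdeg : ∀ b ∈ B, ∀ s ⊆ A, (∀ a ∈ s, H.Adj b a) → #s ≤ 2) : #A ≤ #B + 1 := by
  classical
  obtain rfl | ⟨r, hr⟩ := A.eq_empty_or_nonempty
  · simp
  choose! p hp_adj hp_dist using fun v (h : H.Reachable v r) hne => h.exists_adj_dist_lt hne
  have hpB : ∀ a ∈ A.erase r, p a ∈ B := fun a ha =>
    have haA := mem_of_mem_erase ha
    hA a haA _ (hp_adj a (hreach a haA r hr) (ne_of_mem_erase ha))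
  -- Two children `a ≠ a'` of `b` together with the parent of `b` would be three `A`-neighbours.
  have hp_inj : Set.InjOn p (A.erase r) := by
    intro a ha a' ha' hpa
    by_contra hne
    obtain ⟨har, haA⟩ := mem_erase.1 ha
    obtain ⟨har', haA'⟩ := mem_erase.1 ha'
    have hra := hreach a haA r hr
    have hra' := hreach a' haA' r hr
    have hab := hp_adj a hra har
    have ha'b : H.Adj a' (p a) := hpa ▸ hp_adj a' hra' har'
    have hba := hp_dist a hra har
    have hba' : H.dist (p a) r < H.dist a' r := hpa ▸ hp_dist a' hra' har'
    set b := p a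
    have hbB : b ∈ B := hpB a ha
    have hbr : b ≠ r := fun h => disjoint_left.1 hAB hr (h ▸ hbB)
    have hbq := hp_adj b (hab.symm.reachable.trans hra) hbr
    have hqb := hp_dist b (hab.symm.reachable.trans hra) hbr
    have hqa : p b ≠ a := fun h => by rw [h] at hqb; omega
    have hqa' : p b ≠ a' := fun h => by rw [h] at hqb; omega
    have := hdeg b hbB {a, a', p b} (by
      simp only [insert_subset_iff, singleton_subset_iff]
      exact ⟨haA, haA', hB b hbB _ hbq⟩) (by simpa using ⟨hab.symm, ha'b.symm, hbq⟩)
    rw [card_eq_three.2 ⟨a, a', p b, hne, hqa.symm, hqa'.symm, rfl⟩] at this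
    omega
  calc #A = #(A.erase r) + 1 := (card_erase_add_one hr).symm
    _ ≤ #B + 1 := Nat.add_le_add_right (card_le_card_of_injOn p hpB hp_inj) 1

variable {k : ℕ}

def colorClass [Fintype V] (c : V → Fin k) (i : Fin k) : Finset V := {v | c v = i}

def kempeGraph (G : SimpleGraph V) (c : V → Fin k) (i j : Fin k) : SimpleGraph V where
  Adj u v := G.Adj u v ∧ (c u = i ∧ c v = j ∨ c u = j ∧ c v = i)
  symm := ⟨fun _ _ h => ⟨h.1.symm, h.2.symm.imp And.symm And.symm⟩⟩
  loopless := ⟨fun _ h => h.1.ne rfl⟩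

@[simp]
theorem kempeGraph_adj {G : SimpleGraph V} {c : V → Fin k} {i j : Fin k} {u v : V} :
    (kempeGraph G c i j).Adj u v ↔ G.Adj u v ∧ (c u = i ∧ c v = j ∨ c u = j ∧ c v = i) :=
  Iff.rfl

def kempeSwap [DecidableEq V] (c : V → Fin k) (i j : Fin k) (S : Finset V) (v : V) : Fin k :=
  if v ∈ S then Equiv.swap i j (c v) else c v

theorem IsProperColoring.kempeSwap [DecidableEq V] {G : SimpleGraph V} {c : V → Fin k}
    (hc : IsProperColoring G c) {i j : Fin k} {S : Finset V}
    (hS : ∀ u v, (kempeGraph G c i j).Adj u v → u ∈ S → v ∈ S) :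
    IsProperColoring G (kempeSwap c i j S) := by
  have hcross : ∀ u v, G.Adj u v → u ∈ S → v ∉ S → Equiv.swap i j (c u) ≠ c v := by
    intro u v huv hu hv h
    rw [Equiv.swap_apply_def] at h
    split_ifs at h with hi hj
    · exact hv (hS u v (kempeGraph_adj.2 ⟨huv, .inl ⟨hi, h.symm⟩⟩) hu)
    · exact hv (hS u v (kempeGraph_adj.2 ⟨huv, .inr ⟨hj, h.symm⟩⟩) hu)
    · exact hc u v huv h
  intro u v huv
  unfold _root_.kempeSwap
  by_cases hu : u ∈ S <;> by_cases hv : v ∈ S <;> simp only [hu, hv, if_true, if_false]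
  · exact (Equiv.swap i j).injective.ne (hc u v huv)
  · exact hcross u v huv hu hv
  · exact (hcross v u huv.symm hv hu).symm
  · exact hc u v huv

theorem card_colorClass_kempeSwap [Fintype V] [DecidableEq V] (c : V → Fin k) (i j : Fin k)
    (S : Finset V) (l : Fin k) :
    #(colorClass (kempeSwap c i j S) l) + #(colorClass c l ∩ S) =
      #(colorClass c l) + #(colorClass c (Equiv.swap i j l) ∩ S) := by
  have hsplit : colorClass (kempeSwap c i j S) l =
      (colorClass c l \ S) ∪ (colorClass c (Equiv.swap i j l) ∩ S) := by
    ext v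
    simp only [colorClass, mem_filter, mem_univ, true_and, mem_union, mem_sdiff, mem_inter]
    by_cases hv : v ∈ S <;> simp [kempeSwap, hv, Equiv.swap_apply_eq_iff]
  rw [hsplit, card_union_of_disjoint (disjoint_sdiff_self_left.mono_right inter_subset_right),
    add_right_comm, card_sdiff_add_card_inter]

theorem ClawFree.card_colorClass_inter_le [Fintype V] [DecidableEq V] {G : SimpleGraph V}
    (hG : ClawFree G) {c : V → Fin k} (hc : IsProperColoring G c) {i j : Fin k} (hij : i ≠ j)
    {C : (kempeGraph G c i j).ConnectedComponent} {S : Finset V} (hS : (S : Set V) = C.supp) :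
    #(colorClass c i ∩ S) ≤ #(colorClass c j ∩ S) + 1 := by
  have hmem {v l} : v ∈ colorClass c l ∩ S ↔
      c v = l ∧ (kempeGraph G c i j).connectedComponentMk v = C := by
    rw [mem_inter, ← mem_coe (s := S), hS, ConnectedComponent.mem_supp_iff]
    simp [colorClass]
  apply card_le_card_add_one_of_bipartite
  · exact disjoint_left.2 fun v hvi hvj => hij ((hmem.1 hvi).1.symm.trans (hmem.1 hvj).1)
  · exact fun a ha a' ha' => ConnectedComponent.exact ((hmem.1 ha).2.trans (hmem.1 ha').2.symm)
  · intro a ha v hav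
    obtain ⟨hca, haC⟩ := hmem.1 ha
    exact hmem.2 ⟨(hav.2.resolve_right fun h => hij (hca.symm.trans h.1)).2,
      (ConnectedComponent.connectedComponentMk_eq_of_adj hav).symm.trans haC⟩
  · intro b hb v hbv
    obtain ⟨hcb, hbC⟩ := hmem.1 hb
    exact hmem.2 ⟨(hbv.2.resolve_left fun h => hij (h.1.symm.trans hcb)).2,
      (ConnectedComponent.connectedComponentMk_eq_of_adj hbv).symm.trans hbC⟩
  · intro b _ s hs hadj
    exact hG.card_le_two (fun a ha => (hadj a ha).1) fun x hx y hy _ hxy =>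
      hc x y hxy ((hmem.1 (hs hx)).1.trans (hmem.1 (hs hy)).1.symm)

theorem ClawFree.exists_kempe_transfer [Fintype V] {G : SimpleGraph V} (hG : ClawFree G)
    {c : V → Fin k} (hc : IsProperColoring G c) {i j : Fin k}
    (hij : #(colorClass c j) < #(colorClass c i)) :
    ∃ c' : V → Fin k, IsProperColoring G c' ∧ #(colorClass c' i) + 1 = #(colorClass c i) ∧
      #(colorClass c' j) = #(colorClass c j) + 1 ∧
      ∀ l, l ≠ i → l ≠ j → #(colorClass c' l) = #(colorClass c l) := by
  classical
  have hne : i ≠ j := by rintro rfl; exact lt_irrefl _ hij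
  set H := kempeGraph G c i j
  have hfib (l) :
      #(colorClass c l) = ∑ C : H.ConnectedComponent, #(colorClass c l ∩ C.supp.toFinset) := by
    rw [card_eq_sum_card_fiberwise (f := H.connectedComponentMk) (t := univ) fun _ _ => mem_univ _]
    refine sum_congr rfl fun C _ => congrArg card ?_
    ext v
    simp
  obtain ⟨C, -, hC⟩ := exists_lt_of_sum_lt (hfib j ▸ hfib i ▸ hij)
  set S := C.supp.toFinset
  have hS : (S : Set V) = C.supp := Set.coe_toFinset _
  have hcomp := hG.card_colorClass_inter_le hc hne hS
  have hclosed : ∀ u v, H.Adj u v → u ∈ S → v ∈ S := fun u v huv hu => by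
    rw [← mem_coe, hS] at hu ⊢
    exact (ConnectedComponent.connectedComponentMk_eq_of_adj huv).symm.trans hu
  refine ⟨kempeSwap c i j S, hc.kempeSwap hclosed, ?_, ?_, fun l hli hlj => ?_⟩
  · have := card_colorClass_kempeSwap c i j S i
    rw [Equiv.swap_apply_left] at this
    omega
  · have := card_colorClass_kempeSwap c i j S j
    rw [Equiv.swap_apply_right] at this
    omega
  · have := card_colorClass_kempeSwap c i j S l
    rw [Equiv.swap_apply_of_ne_of_ne hli hlj] at this
    omega

theorem IsProperColoring.isEquitableColoring [Fintype V] {G : SimpleGraph V} {c : V → Fin k}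
    (hc : IsProperColoring G c)
    (hbal : (Set.univ : Set (Fin k)).EquitableOn fun l => #(colorClass c l)) :
    IsEquitableColoring G c := by
  refine ⟨hc, fun l => ?_⟩
  have hsum : ∑ l, #(colorClass c l) = Fintype.card V :=
    (card_eq_sum_card_fiberwise fun v _ => mem_univ (c v)).symm
  have := EquitableOn.eq_div_or_eq_ceil_div (s := univ) (by rwa [coe_univ]) (mem_univ l)
  rwa [hsum, card_univ, Fintype.card_fin] at this

theorem ClawFree.hasEquitableColoring [Fintype V] {G : SimpleGraph V} (hG : ClawFree G)
    {c : V → Fin k} (hc : IsProperColoring G c) : HasEquitableColoring G k := by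
  induction hN : ∑ l, #(colorClass c l) ^ 2 using Nat.strong_induction_on generalizing c with
  | _ N ih =>
  by_cases hbal : (Set.univ : Set (Fin k)).EquitableOn fun l => #(colorClass c l)
  · exact ⟨c, hc.isEquitableColoring hbal⟩
  obtain ⟨i, -, j, -, hij⟩ := Set.not_equitableOn.1 hbal
  obtain ⟨c', hc', hi, hj, hl⟩ := hG.exists_kempe_transfer hc (i := i) (j := j) (by omega)
  exact ih _ (hN ▸ sum_sq_lt_of_transfer hij hi hj hl) hc' rfl

end Graph

/-- A claw-free graph admitting a proper `k`-coloring admits an equitable `k`-coloring. -/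
theorem equitable_coloring_of_clawfree_of_colorable
    {V : Type*} [Fintype V] (G : SimpleGraph V) (k : ℕ) (hclaw : ClawFree G)
    (c : V → Fin k) (hc : IsProperColoring G c) :
    HasEquitableColoring G k :=
  hclaw.hasEquitableColoring hc
end

section
/- Let a₁,…,aₙ be positive integers and k, B positive integers with a₁ + ⋯ + aₙ = kB. Let G be the disjoint union of the antiflowers F₋(a₁,k), …, F₋(aₙ,k). Then G admits an equitable k-coloring if and only if there is a function σ : {1,…,n} → {1,…,k} such that for every i ∈ {1,…,k}, the sum of a_j over all j with σ(j) = i equals B. -/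
/-- The `(a,k)`-antiflower: the join of a clique on `k-1` vertices (the `inl` part)
with an independent set on `a+1` vertices (the `inr` part). -/
def antiflower (a k : ℕ) : SimpleGraph (Fin (k - 1) ⊕ Fin (a + 1)) where
  Adj u v := u ≠ v ∧ (u.isLeft ∨ v.isLeft)
  symm := ⟨fun _ _ h => ⟨h.1.symm, h.2.symm⟩⟩
  loopless := ⟨fun _ h => h.1 rfl⟩

/-- Disjoint union of an indexed family of graphs: vertices in different summands are
never adjacent, and within a summand adjacency is that of the summand. -/
def disjUnion {n : ℕ} {V : Fin n → Type*} (G : ∀ j, SimpleGraph (V j)) :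
    SimpleGraph ((j : Fin n) × V j) where
  Adj u v := ∃ (j : Fin n) (x y : V j), u = ⟨j, x⟩ ∧ v = ⟨j, y⟩ ∧ (G j).Adj x y
  symm := ⟨by rintro u v ⟨j, x, y, rfl, rfl, h⟩; exact ⟨j, y, x, rfl, rfl, h.symm⟩⟩
  loopless := ⟨by
    rintro u ⟨j, x, y, rfl, h2, h⟩
    obtain rfl : x = y := by simpa using h2
    exact (G j).loopless.irrefl x h⟩


open Finset

theorem isEquitableColoring_iff_of_card_eq_mul {V : Type*} [Fintype V] (G : SimpleGraph V)
    {k m : ℕ} (c : V → Fin k) (hk : 1 ≤ k) (hV : Fintype.card V = k * m) :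
    IsEquitableColoring G c ↔ IsProperColoring G c ∧ ∀ i, #{v | c v = i} = m := by
  have hceil : (k * m + k - 1) / k = m := Nat.div_eq_of_lt_le (by lia) (by lia)
  simp only [IsEquitableColoring, hV, Nat.mul_div_right m hk, hceil, or_self]

theorem isProperColoring_disjUnion_iff {n k : ℕ} {V : Fin n → Type*}
    {G : ∀ j, SimpleGraph (V j)} {c : (Σ j, V j) → Fin k} :
    IsProperColoring (disjUnion G) c ↔ ∀ j, IsProperColoring (G j) fun x => c ⟨j, x⟩ := by
  constructor
  · exact fun hc j x y hxy => hc _ _ ⟨j, x, y, rfl, rfl, hxy⟩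
  · rintro hc _ _ ⟨j, x, y, rfl, rfl, hxy⟩
    exact hc j x y hxy

theorem card_filter_sigma {ι : Type*} [Fintype ι] {α : ι → Type*} [∀ j, Fintype (α j)]
    (p : (Σ j, α j) → Prop) [DecidablePred p] :
    #{v | p v} = ∑ j, #{x | p ⟨j, x⟩} := by
  simp only [card_filter, Fintype.sum_sigma]

theorem card_filter_sum {α β : Type*} [Fintype α] [Fintype β] (p : α ⊕ β → Prop)
    [DecidablePred p] :
    #{v | p v} = #{x | p (.inl x)} + #{y | p (.inr y)} := by
  simp only [card_filter, Fintype.sum_sum_type]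

theorem card_filter_eq_of_injective {α β : Type*} [Fintype α] [DecidableEq β] {f : α → β}
    (hf : f.Injective) (b : β) : #{x | f x = b} = if b ∈ univ.image f then 1 else 0 := by
  rw [← card_image_of_injective _ hf, ← filter_image (p := (· = b)), filter_eq']
  split_ifs <;> rfl

namespace IsProperColoring

variable {a k : ℕ} {c : Fin (k - 1) ⊕ Fin (a + 1) → Fin k}

theorem antiflower_injective_inl (hc : IsProperColoring (antiflower a k) c) :
    Function.Injective fun x => c (.inl x) := by
  intro x y hxy
  by_contra hne
  exact hc _ _ ⟨fun h => hne (Sum.inl.inj h), Or.inl rfl⟩ hxy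

theorem antiflower_inl_ne_inr (hc : IsProperColoring (antiflower a k) c) (x : Fin (k - 1))
    (y : Fin (a + 1)) : c (.inl x) ≠ c (.inr y) :=
  hc _ _ ⟨Sum.inl_ne_inr, Or.inl rfl⟩

theorem antiflower_image_inl_eq_compl (hc : IsProperColoring (antiflower a k) c)
    (y : Fin (a + 1)) :
    univ.image (fun x => c (.inl x)) = {c (.inr y)}ᶜ := by
  refine eq_of_subset_of_card_le ?_ ?_
  · intro z hz
    obtain ⟨x, -, rfl⟩ := mem_image.mp hz
    simpa using hc.antiflower_inl_ne_inr x y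
  · rw [card_compl, card_image_of_injective _ hc.antiflower_injective_inl]
    simp

theorem antiflower_inr_eq (hc : IsProperColoring (antiflower a k) c) (y : Fin (a + 1)) :
    c (.inr y) = c (.inr 0) := by
  simpa using
    (hc.antiflower_image_inl_eq_compl y).symm.trans (hc.antiflower_image_inl_eq_compl 0)

theorem card_colorClass_antiflower (hc : IsProperColoring (antiflower a k) c) (i : Fin k) :
    #{v | c v = i} = 1 + if c (.inr 0) = i then a else 0 := by
  rw [card_filter_sum, card_filter_eq_of_injective hc.antiflower_injective_inl,
    hc.antiflower_image_inl_eq_compl 0]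
  simp only [hc.antiflower_inr_eq, mem_compl, mem_singleton]
  by_cases h : c (.inr 0) = i
  · simp [h, add_comm]
  · simp [h, Ne.symm h]

end IsProperColoring

theorem card_colorClass_disjUnion_antiflower {n k : ℕ} {a : Fin n → ℕ}
    {c : (Σ j, Fin (k - 1) ⊕ Fin (a j + 1)) → Fin k}
    (hc : IsProperColoring (disjUnion fun j => antiflower (a j) k) c) (i : Fin k) :
    #{v | c v = i} = n + ∑ j with c ⟨j, .inr 0⟩ = i, a j := by
  rw [card_filter_sigma, sum_congr rfl fun j _ =>
    (isProperColoring_disjUnion_iff.mp hc j).card_colorClass_antiflower i,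
    sum_add_distrib, sum_filter]
  simp

theorem card_sigma_antiflower {n k : ℕ} (a : Fin n → ℕ) (hk : 1 ≤ k) :
    Fintype.card (Σ j, Fin (k - 1) ⊕ Fin (a j + 1)) = n * k + ∑ j, a j := by
  simp only [Fintype.card_sigma, Fintype.card_sum, Fintype.card_fin]
  rw [sum_congr rfl fun j _ => show k - 1 + (a j + 1) = k + a j by lia, sum_add_distrib]
  simp

theorem isProperColoring_antiflower_succAbove {a K : ℕ} (s : Fin (K + 1)) :
    IsProperColoring (antiflower a (K + 1)) (Sum.elim s.succAbove fun _ => s) := by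
  rintro (x | x) (y | y) ⟨hxy, hleft⟩
  · exact fun h => hxy (congrArg Sum.inl (Fin.succAbove_right_injective h))
  · exact Fin.succAbove_ne s x
  · exact (Fin.succAbove_ne s y).symm
  · simp at hleft

theorem equitable_coloring_disjoint_antiflowers_iff_binpacking_general
    (n k B : ℕ) (a : Fin n → ℕ) (hk : 1 ≤ k)
    (hsum : ∑ j, a j = k * B) :
    HasEquitableColoring (disjUnion fun j => antiflower (a j) k) k ↔
      ∃ σ : Fin n → Fin k, ∀ i : Fin k,
        ∑ j ∈ Finset.univ.filter (fun j => σ j = i), a j = B := by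
  have hV : Fintype.card (Σ j, Fin (k - 1) ⊕ Fin (a j + 1)) = k * (n + B) := by
    rw [card_sigma_antiflower a hk, hsum]; ring
  simp only [HasEquitableColoring, isEquitableColoring_iff_of_card_eq_mul _ _ hk hV]
  constructor
  · rintro ⟨c, hc, hsize⟩
    refine ⟨fun j => c ⟨j, .inr 0⟩, fun i => ?_⟩
    have hcount := card_colorClass_disjUnion_antiflower hc i
    rw [hsize i] at hcount
    lia
  · rintro ⟨σ, hσ⟩
    obtain ⟨K, rfl⟩ : ∃ K, k = K + 1 := ⟨k - 1, by lia⟩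
    have hc : IsProperColoring (disjUnion fun j => antiflower (a j) (K + 1))
        fun v => Sum.elim (σ v.1).succAbove (fun _ => σ v.1) v.2 :=
      isProperColoring_disjUnion_iff.mpr fun j => isProperColoring_antiflower_succAbove (σ j)
    refine ⟨_, hc, fun i => ?_⟩
    rw [card_colorClass_disjUnion_antiflower hc i, ← hσ i]
    rfl

/-- The disjoint union of the antiflowers `F₋(a₁,k), …, F₋(aₙ,k)` admits an equitable
`k`-coloring iff the items `a₁,…,aₙ` can be packed into `k` bins each summing exactly `B`. -/
theorem equitable_coloring_disjoint_antiflowers_iff_binpacking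
    (n k B : ℕ) (a : Fin n → ℕ) (ha : ∀ j, 1 ≤ a j) (hk : 1 ≤ k) (hB : 1 ≤ B)
    (hsum : ∑ j, a j = k * B) :
    HasEquitableColoring (disjUnion fun j => antiflower (a j) k) k ↔
      ∃ σ : Fin n → Fin k, ∀ i : Fin k,
        ∑ j ∈ Finset.univ.filter (fun j => σ j = i), a j = B :=
  equitable_coloring_disjoint_antiflowers_iff_binpacking_general n k B a hk hsum
end

section
/- Let k ≥ 2 and a ≥ 1, and let H be the (a,k)-trem with cut-vertex set Y = {y₁,…,y_a}. In every proper k-coloring of H, all vertices of Y receive the same color. -/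
/-- The `(a,k)`-trem: vertices `inl i` (`0`-indexed: `inl i` is `y_{i+1}`), together with
`2a` pairwise disjoint cliques of size `k-1`: `inr (i, false, x)` lies in `Q_{i+1}` and
`inr (i, true, x)` lies in `Q_{i+1}'`. Each `y_{i+1}` is adjacent to every vertex of
`Q_{i+1}` and `Q_{i+1}'`, and additionally to every vertex of `Q_{i+2}` (when `i+2 ≤ a`). -/
def trem (a k : ℕ) : SimpleGraph (Fin a ⊕ Fin a × Bool × Fin (k - 1)) where
  Adj u v :=
    match u, v with
    | .inl _, .inl _ => False
    | .inl i, .inr (j, b, _) => j = i ∨ (b = false ∧ (j : ℕ) = (i : ℕ) + 1)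
    | .inr (j, b, _), .inl i => j = i ∨ (b = false ∧ (j : ℕ) = (i : ℕ) + 1)
    | .inr (i, b, x), .inr (j, c, y) => i = j ∧ b = c ∧ x ≠ y
  symm := by
    constructor
    rintro (i | ⟨j, b, x⟩) (i' | ⟨j', b', x'⟩) h
    · exact h
    · exact h
    · exact h
    · exact ⟨h.1.symm, h.2.1.symm, h.2.2.symm⟩
  loopless := by
    constructor
    rintro (i | ⟨j, b, x⟩) h
    · exact h
    · exact h.2.2 rfl

/-!
The `k - 1` vertices of the clique `Q_{i+1}` receive pairwise distinct colors, so they use all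
but one of the `k` colors. Both `y_i` and `y_{i+1}` are adjacent to the whole of `Q_{i+1}`, so
each of them must take that one remaining color; hence consecutive cut vertices agree.
-/

open Function

theorem eq_of_notMem_range_of_injective {α β : Type*} [Fintype α] [Fintype β] {f : β → α}
    (hf : Injective f) (hcard : Fintype.card α ≤ Fintype.card β + 1) {x y : α}
    (hx : x ∉ Set.range f) (hy : y ∉ Set.range f) : x = y := by
  classical
  by_contra hxy
  have hcount : (insert x (insert y (Finset.univ.image f))).card = Fintype.card β + 2 := by
    rw [Finset.card_insert_of_notMem, Finset.card_insert_of_notMem,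
      Finset.card_image_of_injective _ hf, Finset.card_univ]
    · simpa using hy
    · simpa [hxy] using hx
  have := Finset.card_le_univ (insert x (insert y (Finset.univ.image f)))
  omega

theorem Fin.apply_eq_apply_of_apply_eq_apply_succ {α : Type*} {a : ℕ} {f : Fin a → α}
    (h : ∀ i j : Fin a, (j : ℕ) = i + 1 → f i = f j) (i j : Fin a) : f i = f j := by
  have eq_zero : ∀ n (hn : n < a), f ⟨n, hn⟩ = f ⟨0, n.zero_le.trans_lt hn⟩ := by
    intro n
    induction n with
    | zero => exact fun _ => rfl
    | succ n ih => exact fun hn => (h _ _ rfl).symm.trans (ih (by omega))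
  exact (eq_zero i i.isLt).trans (eq_zero j j.isLt).symm

section ProperColoring

variable {a k : ℕ} {c : Fin a ⊕ Fin a × Bool × Fin (k - 1) → Fin k}
  (hc : ∀ u v, (trem a k).Adj u v → c u ≠ c v)
include hc

theorem trem_color_clique_injective (j : Fin a) (b : Bool) :
    Injective fun x => c (.inr (j, b, x)) := by
  intro x y hxy
  by_contra hne
  exact hc (.inr (j, b, x)) (.inr (j, b, y)) ⟨rfl, rfl, hne⟩ hxy

theorem trem_color_cutvertex_eq_of_succ {i j : Fin a} (hij : (j : ℕ) = i + 1) :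
    c (.inl i) = c (.inl j) := by
  refine eq_of_notMem_range_of_injective (trem_color_clique_injective hc j false)
    (by simp only [Fintype.card_fin]; omega) ?_ ?_
  · rintro ⟨x, hx⟩
    exact hc (.inr (j, false, x)) (.inl i) (Or.inr ⟨rfl, hij⟩) hx
  · rintro ⟨x, hx⟩
    exact hc (.inr (j, false, x)) (.inl j) (Or.inl rfl) hx

end ProperColoring

theorem trem_proper_coloring_cutvertices_monochromatic_general (a k : ℕ)
    (c : Fin a ⊕ Fin a × Bool × Fin (k - 1) → Fin k)
    (hc : ∀ u v, (trem a k).Adj u v → c u ≠ c v) :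
    ∀ i j : Fin a, c (Sum.inl i) = c (Sum.inl j) :=
  Fin.apply_eq_apply_of_apply_eq_apply_succ fun _ _ => trem_color_cutvertex_eq_of_succ hc

/-- In every proper `k`-coloring of the `(a,k)`-trem, the cut vertices `y₁,…,y_a`
all receive the same color. -/
theorem trem_proper_coloring_cutvertices_monochromatic (a k : ℕ) (ha : 1 ≤ a) (hk : 2 ≤ k)
    (c : Fin a ⊕ Fin a × Bool × Fin (k - 1) → Fin k)
    (hc : ∀ u v, (trem a k).Adj u v → c u ≠ c v) :
    ∀ i j : Fin a, c (Sum.inl i) = c (Sum.inl j) :=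
  trem_proper_coloring_cutvertices_monochromatic_general a k c hc
end

section
/- Let k ≥ 2 and a ≥ 1, and let H be the (a,k)-trem with cut-vertex set Y = {y₁,…,y_a}. In every proper k-coloring of H, the (common) color of the vertices of Y is used exactly a times, and each of the other k−1 colors is used exactly 2a times (exactly once inside each of the 2a cliques of size k−1). -/
open Finset Function SimpleGraph

theorem existsUnique_apply_eq_of_injective_of_card_eq_add_one {α β : Type*} [Fintype α]
    [Fintype β] {f : α → β} (hf : Injective f) (hcard : Fintype.card β = Fintype.card α + 1)
    {b : β} (hb : ∀ x, f x ≠ b) {y : β} (hy : y ≠ b) : ∃! x, f x = y := by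
  classical
  obtain ⟨z, -, hz⟩ :=
    Fintype.existsUnique_notMem_image_of_injective_of_card_eq_add_one f hf hcard
  have hb' : b ∉ univ.image f := by simpa using hb
  have hy' : y ∈ univ.image f := by
    by_contra hy'
    exact hy ((hz y hy').trans (hz b hb').symm)
  obtain ⟨x, -, rfl⟩ := mem_image.1 hy'
  exact ⟨x, rfl, fun _ h => hf h⟩

theorem Finset.card_filter_univ_sum_type {α β : Type*} [Fintype α] [Fintype β]
    (p : α ⊕ β → Prop) [DecidablePred p] :
    #{v | p v} = #{i | p (.inl i)} + #{x | p (.inr x)} := by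
  simp only [card_filter, Fintype.sum_sum_type]

theorem Finset.card_filter_univ_prod_type {α β : Type*} [Fintype α] [Fintype β]
    (p : α × β → Prop) [DecidablePred p] : #{q | p q} = ∑ i, #{x | p (i, x)} := by
  simp only [card_filter, Fintype.sum_prod_type]

namespace trem

variable {a k : ℕ} (C : (trem a k).Coloring (Fin k))

theorem color_clique_injective (i : Fin a) (b : Bool) :
    Injective fun x : Fin (k - 1) => C (.inr (i, b, x)) := by
  intro x y hxy
  by_contra hne
  exact C.valid (v := .inr (i, b, x)) (w := .inr (i, b, y)) ⟨rfl, rfl, hne⟩ hxy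

theorem color_clique_ne_color_cut (i : Fin a) (b : Bool) (x : Fin (k - 1)) :
    C (.inr (i, b, x)) ≠ C (.inl i) :=
  C.valid (Or.inl rfl)

theorem existsUnique_color_clique_eq {i : Fin a} {j : Fin k} (hj : j ≠ C (.inl i)) (b : Bool) :
    ∃! x : Fin (k - 1), C (.inr (i, b, x)) = j :=
  existsUnique_apply_eq_of_injective_of_card_eq_add_one (color_clique_injective C i b)
    (by simp only [Fintype.card_fin]; have := j.pos; omega) (color_clique_ne_color_cut C i b) hj

theorem color_cut_succ {i i' : Fin a} (h : (i' : ℕ) = i + 1) : C (.inl i') = C (.inl i) := by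
  by_contra hne
  obtain ⟨x, hx, -⟩ := existsUnique_color_clique_eq C (Ne.symm hne) false
  have hadj : (trem a k).Adj (.inl i) (.inr (i', false, x)) := Or.inr ⟨rfl, h⟩
  exact C.valid hadj hx.symm

theorem color_cut_eq_color_cut_zero (i : Fin a) : C (.inl i) = C (.inl ⟨0, i.pos⟩) := by
  obtain ⟨n, hn⟩ := i
  induction n with
  | zero => rfl
  | succ n ih => exact (color_cut_succ C (i := ⟨n, by omega⟩) rfl).trans (ih _)

theorem card_filter_color_eq_cut (ha : 1 ≤ a) : #{v | C v = C (.inl ⟨0, ha⟩)} = a := by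
  rw [card_filter_univ_sum_type, filter_true_of_mem fun i _ => color_cut_eq_color_cut_zero C i,
    filter_false_of_mem fun ⟨i, b, x⟩ _ =>
      color_cut_eq_color_cut_zero C i ▸ color_clique_ne_color_cut C i b x]
  simp

theorem card_filter_color_eq_of_ne_cut {j : Fin k} (ha : 1 ≤ a)
    (hj : j ≠ C (.inl ⟨0, ha⟩)) :
    #{v | C v = j} = 2 * a := by
  have hj' (i : Fin a) : j ≠ C (.inl i) := color_cut_eq_color_cut_zero C i ▸ hj
  rw [card_filter_univ_sum_type, filter_false_of_mem fun i _ => (hj' i).symm, card_empty,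
    zero_add]
  have hclique (i : Fin a) (b : Bool) : #{x | C (.inr (i, b, x)) = j} = 1 :=
    (Fintype.existsUnique_iff_card_one _).1 (existsUnique_color_clique_eq C (hj' i) b)
  simp_rw [card_filter_univ_prod_type, hclique]
  simp [mul_comm]

end trem

theorem trem_proper_coloring_class_sizes_general (a k : ℕ) (ha : 1 ≤ a)
    (c : Fin a ⊕ Fin a × Bool × Fin (k - 1) → Fin k)
    (hc : ∀ u v, (trem a k).Adj u v → c u ≠ c v) :
    (Finset.univ.filter fun v => c v = c (Sum.inl ⟨0, ha⟩)).card = a ∧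
    ∀ j : Fin k, j ≠ c (Sum.inl ⟨0, ha⟩) →
      (Finset.univ.filter fun v => c v = j).card = 2 * a ∧
      ∀ (i : Fin a) (b : Bool), ∃! x : Fin (k - 1), c (Sum.inr (i, b, x)) = j := by
  let C : (trem a k).Coloring (Fin k) := Coloring.mk c (hc _ _)
  refine ⟨trem.card_filter_color_eq_cut C ha, fun j hj =>
    ⟨trem.card_filter_color_eq_of_ne_cut C ha hj, fun i b => ?_⟩⟩
  exact trem.existsUnique_color_clique_eq C (trem.color_cut_eq_color_cut_zero C i ▸ hj) b

/-- In every proper `k`-coloring of the `(a,k)`-trem, the common color of the cut vertices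
`y₁,…,y_a` is used exactly `a` times, and each of the other `k-1` colors is used exactly
`2a` times — exactly once inside each of the `2a` cliques of size `k-1`. -/
theorem trem_proper_coloring_class_sizes (a k : ℕ) (ha : 1 ≤ a) (hk : 2 ≤ k)
    (c : Fin a ⊕ Fin a × Bool × Fin (k - 1) → Fin k)
    (hc : ∀ u v, (trem a k).Adj u v → c u ≠ c v) :
    (Finset.univ.filter fun v => c v = c (Sum.inl ⟨0, ha⟩)).card = a ∧
    ∀ j : Fin k, j ≠ c (Sum.inl ⟨0, ha⟩) →
      (Finset.univ.filter fun v => c v = j).card = 2 * a ∧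
      ∀ (i : Fin a) (b : Bool), ∃! x : Fin (k - 1), c (Sum.inr (i, b, x)) = j :=
  trem_proper_coloring_class_sizes_general a k ha c hc
end

section
/- For all integers a ≥ 1 and k ≥ 2, the (a,k)-trem H(a,k) contains no induced subgraph isomorphic to the star K_{1,4}; that is, no vertex of H(a,k) has four pairwise non-adjacent neighbors. -/
/-!
The neighbourhood of every vertex of a trem is covered by three cliques: the neighbours of `y_i`
lie in `Q_i ∪ Q_i' ∪ Q_{i+1}`, and those of a vertex of `Q_i` or `Q_i'` are the rest of its own
clique together with at most the two vertices `y_{i-1}` and `y_i`. Two non-adjacent neighbours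
must lie in different cliques of the cover, so there are at most three of them.
-/

namespace SimpleGraph

variable {V : Type*} {G : SimpleGraph V}

theorem not_exists_four_indep_neighbors_of_isClique_label {v : V} (c : V → ℕ)
    (hc : ∀ x, G.Adj v x → c x < 3) (hclique : ∀ n, G.IsClique {x | G.Adj v x ∧ c x = n}) :
    ¬ ∃ x₁ x₂ x₃ x₄ : V,
      G.Adj v x₁ ∧ G.Adj v x₂ ∧ G.Adj v x₃ ∧ G.Adj v x₄ ∧
      x₁ ≠ x₂ ∧ x₁ ≠ x₃ ∧ x₁ ≠ x₄ ∧ x₂ ≠ x₃ ∧ x₂ ≠ x₄ ∧ x₃ ≠ x₄ ∧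
      ¬ G.Adj x₁ x₂ ∧ ¬ G.Adj x₁ x₃ ∧ ¬ G.Adj x₁ x₄ ∧
      ¬ G.Adj x₂ x₃ ∧ ¬ G.Adj x₂ x₄ ∧ ¬ G.Adj x₃ x₄ := by
  rintro ⟨x₁, x₂, x₃, x₄, h₁, h₂, h₃, h₄, d₁₂, d₁₃, d₁₄, d₂₃, d₂₄, d₃₄,
    n₁₂, n₁₃, n₁₄, n₂₃, n₂₄, n₃₄⟩
  have label_ne {x y : V} (hx : G.Adj v x) (hy : G.Adj v y) (hxy : x ≠ y) (hn : ¬ G.Adj x y) :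
      c x ≠ c y :=
    fun he => hn (hclique (c y) ⟨hx, he⟩ ⟨hy, rfl⟩ hxy)
  have := label_ne h₁ h₂ d₁₂ n₁₂
  have := label_ne h₁ h₃ d₁₃ n₁₃
  have := label_ne h₁ h₄ d₁₄ n₁₄
  have := label_ne h₂ h₃ d₂₃ n₂₃
  have := label_ne h₂ h₄ d₂₄ n₂₄
  have := label_ne h₃ h₄ d₃₄ n₃₄
  have := hc _ h₁
  have := hc _ h₂
  have := hc _ h₃
  have := hc _ h₄
  omega

end SimpleGraph

section trem

variable {a k : ℕ}

@[simp] theorem trem_adj_inl_inl (i j : Fin a) : ¬ (trem a k).Adj (.inl i) (.inl j) := id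

@[simp] theorem trem_adj_inl_inr (i j : Fin a) (b : Bool) (y : Fin (k - 1)) :
    (trem a k).Adj (.inl i) (.inr (j, b, y)) ↔ j = i ∨ (b = false ∧ (j : ℕ) = i + 1) :=
  Iff.rfl

@[simp] theorem trem_adj_inr_inl (i j : Fin a) (b : Bool) (y : Fin (k - 1)) :
    (trem a k).Adj (.inr (j, b, y)) (.inl i) ↔ j = i ∨ (b = false ∧ (j : ℕ) = i + 1) :=
  Iff.rfl

@[simp] theorem trem_adj_inr_inr (i j : Fin a) (b c : Bool) (x y : Fin (k - 1)) :
    (trem a k).Adj (.inr (i, b, x)) (.inr (j, c, y)) ↔ i = j ∧ b = c ∧ x ≠ y :=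
  Iff.rfl

-- Only the values on neighbours of `v` matter; there the subtractions do not truncate.
def tremLabel : (v x : Fin a ⊕ Fin a × Bool × Fin (k - 1)) → ℕ
  | .inl i, .inr (j, b, _) => 2 * j + b.toNat - 2 * i
  | .inr (i, _, _), .inl j => i - j
  | _, _ => 2

theorem tremLabel_lt_three {v x : Fin a ⊕ Fin a × Bool × Fin (k - 1)} (h : (trem a k).Adj v x) :
    tremLabel v x < 3 := by
  rcases v with i | ⟨i, b, y⟩ <;> rcases x with j | ⟨j, c, z⟩
  · exact absurd h (trem_adj_inl_inl i j)
  · have := c.toNat_le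
    rcases h with rfl | ⟨rfl, hj⟩ <;> simp only [tremLabel, Bool.toNat_false] <;> omega
  · rcases h with rfl | ⟨-, hi⟩ <;> simp only [tremLabel] <;> omega
  · exact Nat.lt_succ_self 2

theorem isClique_tremLabel (v : Fin a ⊕ Fin a × Bool × Fin (k - 1)) (n : ℕ) :
    (trem a k).IsClique {x | (trem a k).Adj v x ∧ tremLabel v x = n} := by
  rintro x ⟨hx, rfl⟩ y ⟨hy, hlabel⟩ hne
  rcases v with i | ⟨i, b, z⟩ <;> rcases x with j | ⟨j, c, x⟩ <;> rcases y with j' | ⟨j', c', y⟩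
  all_goals simp_all only [trem_adj_inl_inl, trem_adj_inl_inr, trem_adj_inr_inl, trem_adj_inr_inr,
    ne_eq, Sum.inl.injEq, Sum.inr.injEq, Prod.mk.injEq, not_and, true_and, and_self, reduceCtorEq,
    not_false_eq_true, tremLabel]
  case inl.inr.inr =>
    have hjc : j = j' ∧ c = c' := by
      cases c <;> cases c' <;> simp [Fin.ext_iff] at hx hy hlabel ⊢ <;> omega
    exact ⟨hjc.1, hjc.2, hne hjc.1 hjc.2⟩
  case inr.inl.inl =>
    simp only [Fin.ext_iff] at hx hy hne
    omega

end trem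

theorem trem_K14_free_general (a k : ℕ) :
    ¬ ∃ v x₁ x₂ x₃ x₄ : Fin a ⊕ Fin a × Bool × Fin (k - 1),
      (trem a k).Adj v x₁ ∧ (trem a k).Adj v x₂ ∧ (trem a k).Adj v x₃ ∧ (trem a k).Adj v x₄ ∧
      x₁ ≠ x₂ ∧ x₁ ≠ x₃ ∧ x₁ ≠ x₄ ∧ x₂ ≠ x₃ ∧ x₂ ≠ x₄ ∧ x₃ ≠ x₄ ∧
      ¬ (trem a k).Adj x₁ x₂ ∧ ¬ (trem a k).Adj x₁ x₃ ∧ ¬ (trem a k).Adj x₁ x₄ ∧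
      ¬ (trem a k).Adj x₂ x₃ ∧ ¬ (trem a k).Adj x₂ x₄ ∧ ¬ (trem a k).Adj x₃ x₄ := by
  rintro ⟨v, hv⟩
  exact SimpleGraph.not_exists_four_indep_neighbors_of_isClique_label (tremLabel v)
    (fun _ => tremLabel_lt_three) (isClique_tremLabel v) hv

/-- The `(a,k)`-trem has no induced `K_{1,4}`: no vertex has four pairwise non-adjacent
neighbors. -/
theorem trem_K14_free (a k : ℕ) (ha : 1 ≤ a) (hk : 2 ≤ k) :
    ¬ ∃ v x₁ x₂ x₃ x₄ : Fin a ⊕ Fin a × Bool × Fin (k - 1),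
      (trem a k).Adj v x₁ ∧ (trem a k).Adj v x₂ ∧ (trem a k).Adj v x₃ ∧ (trem a k).Adj v x₄ ∧
      x₁ ≠ x₂ ∧ x₁ ≠ x₃ ∧ x₁ ≠ x₄ ∧ x₂ ≠ x₃ ∧ x₂ ≠ x₄ ∧ x₃ ≠ x₄ ∧
      ¬ (trem a k).Adj x₁ x₂ ∧ ¬ (trem a k).Adj x₁ x₃ ∧ ¬ (trem a k).Adj x₁ x₄ ∧
      ¬ (trem a k).Adj x₂ x₃ ∧ ¬ (trem a k).Adj x₂ x₄ ∧ ¬ (trem a k).Adj x₃ x₄ :=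
  trem_K14_free_general a k
end

section
/- Let G be a finite simple graph that is chordal (every cycle of length at least 4 has a chord) and claw-free (no induced K_{1,3}), and let φ be a proper coloring of G. Then for any two colors c and d, the subgraph of G induced by the union of the color classes of c and d contains no cycle; hence each of its connected components is a path. -/
/-- Chordal: every cycle of length at least 4 has a chord, i.e. an edge of the graph
joining two vertices of the cycle which is not an edge of the cycle. -/
def Chordal {V : Type*} (G : SimpleGraph V) : Prop :=
  ∀ (v : V) (w : G.Walk v v), w.IsCycle → 4 ≤ w.length →
    ∃ x y : V, x ∈ w.support ∧ y ∈ w.support ∧ G.Adj x y ∧ s(x, y) ∉ w.edges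

/-!
Let `H` be the subgraph induced by the colour classes of `c` and `d`. It inherits claw-freeness
and chordality from `G`, and it is bipartite. In a bipartite graph the neighbours of a vertex are
pairwise non-adjacent, so claw-freeness leaves every vertex of `H` at most two neighbours.
A cycle of `H` has even length, hence length at least four, so it has a chord; an endpoint of the
chord then has three neighbours, two on the cycle and one across the chord. Finally, in a finite
graph of maximum degree two a longest path inside a component cannot be left along any edge, so
it covers the whole component.
-/

open SimpleGraph Walk

section

variable {V : Type*} {G : SimpleGraph V}

theorem ClawFree.induce (h : ClawFree G) (s : Set V) : ClawFree (G.induce s) :=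
  fun v x y z hx hy hz hxy hxz hyz =>
    h v x y z hx hy hz (Subtype.coe_ne_coe.mpr hxy) (Subtype.coe_ne_coe.mpr hxz)
      (Subtype.coe_ne_coe.mpr hyz)

theorem Chordal.induce (h : Chordal G) (s : Set V) : Chordal (G.induce s) := by
  intro v w hw hlen
  let e := Embedding.induce (G := G) s
  obtain ⟨x, y, hx, hy, hxy, hchord⟩ :=
    h _ (w.map e.toHom) (hw.map e.injective) (by rwa [length_map])
  rw [Walk.support_map, List.mem_map] at hx hy
  obtain ⟨x, hx, rfl⟩ := hx
  obtain ⟨y, hy, rfl⟩ := hy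
  refine ⟨x, y, hx, hy, hxy, fun hmem => hchord ?_⟩
  rw [edges_map]
  exact List.mem_map_of_mem hmem

theorem SimpleGraph.Colorable.not_adj_of_adj_of_adj (h : G.Colorable 2) {v a b : V}
    (ha : G.Adj v a) (hb : G.Adj v b) : ¬ G.Adj a b := fun hab => by
  have := two_colorable_iff_forall_loop_even.mp h v (cons ha (cons hab (cons hb.symm nil)))
  simp only [length_cons, length_nil] at this
  exact absurd this (by decide)

theorem ClawFree.encard_neighborSet_le_two (hG : ClawFree G) (h2 : G.Colorable 2) (v : V) :
    (G.neighborSet v).encard ≤ 2 := by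
  by_contra! h
  obtain ⟨t, ht, ht3⟩ := Set.exists_subset_encard_eq (Order.add_one_le_of_lt h)
  obtain ⟨a, b, e, hab, hae, hbe, rfl⟩ := Set.encard_eq_three.mp ht3
  have ha : G.Adj v a := ht (by simp)
  have hb : G.Adj v b := ht (by simp)
  have he : G.Adj v e := ht (by simp)
  rcases hG v a b e ha hb he hab hae hbe with h | h | h
  · exact h2.not_adj_of_adj_of_adj ha hb h
  · exact h2.not_adj_of_adj_of_adj ha he h
  · exact h2.not_adj_of_adj_of_adj hb he h

theorem SimpleGraph.Subgraph.two_lt_encard_neighborSet {H : G.Subgraph} {x y : V}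
    (hH : (H.neighborSet x).ncard = 2) (hxy : G.Adj x y) (hy : ¬ H.Adj x y) :
    2 < (G.neighborSet x).encard := by
  have hfin : (H.neighborSet x).Finite := Set.finite_of_ncard_pos (by omega)
  calc (2 : ℕ∞) < (insert y (H.neighborSet x)).encard := by
        rw [Set.encard_insert_of_notMem (s := H.neighborSet x) hy, ← hfin.cast_ncard_eq, hH]
        decide
    _ ≤ (G.neighborSet x).encard :=
        Set.encard_le_encard (Set.insert_subset hxy (H.neighborSet_subset x))

theorem Chordal.isAcyclic (hG : Chordal G) (h2 : G.Colorable 2)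
    (hdeg : ∀ v, (G.neighborSet v).encard ≤ 2) : G.IsAcyclic := by
  intro v w hw
  have hlen : 4 ≤ w.length := by
    obtain ⟨k, hk⟩ := two_colorable_iff_forall_loop_even.mp h2 v w
    have := hw.three_le_length
    omega
  obtain ⟨x, y, hx, -, hxy, hchord⟩ := hG v w hw hlen
  refine (hdeg x).not_gt
    (Subgraph.two_lt_encard_neighborSet (hw.ncard_neighborSet_toSubgraph_eq_two hx) hxy ?_)
  rwa [← Subgraph.mem_edgeSet, mem_edges_toSubgraph]

theorem colorable_two_induce_union_colorClasses {C : Type*} {φ : V → C}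
    (hφ : ∀ u v, G.Adj u v → φ u ≠ φ v) (c d : C) :
    (G.induce {u | φ u = c ∨ φ u = d}).Colorable 2 := by
  classical
  refine Fintype.card_bool ▸ (Coloring.mk (fun u => decide (φ u.1 = c)) ?_).colorable
  rintro ⟨u, hu⟩ ⟨v, hv⟩ huv
  have := hφ u v huv
  simp only [ne_eq, decide_eq_decide]
  grind

theorem SimpleGraph.ConnectedComponent.exists_longest_isPath [Finite V]
    (C : G.ConnectedComponent) :
    ∃ (x y : V) (p : G.Walk x y), G.connectedComponentMk x = C ∧ p.IsPath ∧
      ∀ (x' y' : V) (q : G.Walk x' y'), G.connectedComponentMk x' = C → q.IsPath →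
        q.length ≤ p.length := by
  have := Fintype.ofFinite V
  let S : Set ℕ := {n | ∃ (x y : V) (p : G.Walk x y),
    G.connectedComponentMk x = C ∧ p.IsPath ∧ p.length = n}
  have hbdd : BddAbove S := ⟨Fintype.card V, by
    rintro _ ⟨x, y, p, -, hp, rfl⟩
    exact hp.length_lt.le⟩
  obtain ⟨x₀, hx₀⟩ := C.exists_rep
  obtain ⟨x, y, p, hx, hp, hlen⟩ :=
    Nat.sSup_mem (s := S) ⟨0, x₀, x₀, nil, hx₀, IsPath.nil, rfl⟩ hbdd
  exact ⟨x, y, p, hx, hp, fun x' y' q hx' hq =>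
    hlen ▸ le_csSup hbdd ⟨x', y', q, hx', hq, rfl⟩⟩

theorem SimpleGraph.Walk.IsPath.mem_support_of_adj_of_forall_length_le
    (hdeg : ∀ v, (G.neighborSet v).encard ≤ 2) {C : G.ConnectedComponent} {x y : V}
    {p : G.Walk x y} (hx : G.connectedComponentMk x = C) (hp : p.IsPath)
    (hlong : ∀ (x' y' : V) (q : G.Walk x' y'), G.connectedComponentMk x' = C → q.IsPath →
      q.length ≤ p.length)
    {a b : V} (ha : a ∈ p.support) (hab : G.Adj a b) : b ∈ p.support := by
  classical
  by_contra hb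
  have hbC : G.connectedComponentMk b = C := by
    rw [← hx, ConnectedComponent.eq]
    exact hab.symm.reachable.trans (p.takeUntil a ha).reverse.reachable
  obtain ⟨i, rfl, hi⟩ := mem_support_iff_exists_getVert.mp ha
  rcases Nat.eq_zero_or_pos i with rfl | hi0
  · rw [getVert_zero] at hab
    have := hlong _ _ (cons hab.symm p) hbC (hp.cons hb)
    simp at this
  rcases hi.lt_or_eq with hil | rfl
  · refine (hdeg _).not_gt (Subgraph.two_lt_encard_neighborSet
      (hp.ncard_neighborSet_toSubgraph_internal_eq_two hi0.ne' hil) hab fun h => hb ?_)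
    exact p.mem_verts_toSubgraph.mp h.snd_mem
  · rw [getVert_length] at hab
    have := hlong _ _ (cons hab.symm p.reverse) hbC (hp.reverse.cons (by simpa using hb))
    simp at this

theorem SimpleGraph.ConnectedComponent.exists_isPath_support_eq [Finite V]
    (hdeg : ∀ v, (G.neighborSet v).encard ≤ 2) (C : G.ConnectedComponent) :
    ∃ (x y : V) (p : G.Walk x y), p.IsPath ∧
      ∀ w, w ∈ p.support ↔ G.connectedComponentMk w = C := by
  classical
  obtain ⟨x, y, p, hx, hp, hlong⟩ := C.exists_longest_isPath
  refine ⟨x, y, p, hp, fun w => ⟨fun hw => ?_, fun hw => ?_⟩⟩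
  · rw [← hx, ConnectedComponent.eq]
    exact (p.takeUntil w hw).reverse.reachable
  · have hclosed : ∀ {u v : V} (q : G.Walk u v), u ∈ p.support → v ∈ p.support := by
      intro u v q
      induction q with
      | nil => exact id
      | cons h q ih =>
        exact fun hu => ih (hp.mem_support_of_adj_of_forall_length_le hdeg hx hlong hu h)
    obtain ⟨q⟩ := ConnectedComponent.exact (hx.trans hw.symm)
    exact hclosed q p.start_mem_support

end

/-- In a properly colored chordal claw-free graph, the subgraph induced by the union of any
two color classes is acyclic, and each of its connected components is a path. -/
theorem chordal_clawfree_two_classes_union_of_paths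
    {V C : Type*} [Fintype V] (G : SimpleGraph V)
    (hchordal : Chordal G) (hclaw : ClawFree G)
    (φ : V → C) (hφ : ∀ u v, G.Adj u v → φ u ≠ φ v) (c d : C) :
    (∀ (v : {u : V // φ u = c ∨ φ u = d})
        (w : (G.induce {u : V | φ u = c ∨ φ u = d}).Walk v v), ¬ w.IsCycle) ∧
    ∀ comp : (G.induce {u : V | φ u = c ∨ φ u = d}).ConnectedComponent,
      ∃ (x y : {u : V // φ u = c ∨ φ u = d})
        (p : (G.induce {u : V | φ u = c ∨ φ u = d}).Walk x y), p.IsPath ∧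
        ∀ w, w ∈ p.support ↔
          (G.induce {u : V | φ u = c ∨ φ u = d}).connectedComponentMk w = comp := by
  have h2 := colorable_two_induce_union_colorClasses hφ c d
  have hdeg := (hclaw.induce _).encard_neighborSet_le_two h2
  exact ⟨(hchordal.induce _).isAcyclic h2 hdeg, fun comp => comp.exists_isPath_support_eq hdeg⟩
end
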